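/- arXiv:1311.2563 — 5 statements merged into one kernel-verified Lean document; each statement's English description precedes it below -/
import Mathlib

section
/- Let G be a finite simple graph, A ⊆ V(G), and q, k nonnegative integers. Then A is (q,k)-breakable in G if and only if there exist disjoint sets X₀, Y₀ ⊆ A with |X₀| = |Y₀| = q+1 and a set Z ⊆ V(G) ∖ (X₀ ∪ Y₀) with |Z| ≤ k such that Z is an X₀–Y₀ separator in G. -/
open SimpleGraph

variable {V : Type*}

/-- The open neighbourhood `N_G(C)` of a vertex set `C`:
vertices outside `C` with a neighbour in `C`. -/
def setNbhd (G : SimpleGraph V) (C : Set V) : Set V :=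
  {v | v ∉ C ∧ ∃ u ∈ C, G.Adj u v}

/-- The closed neighbourhood `N_G[C] = C ∪ N_G(C)`. -/
def closedNbhd (G : SimpleGraph V) (C : Set V) : Set V :=
  C ∪ setNbhd G C

/-- `W` is `(q,k)`-unbreakable in the induced subgraph `G[U]`:
every separation `(A,B)` of `G[U]` of order at most `k` has
`|(A∖B) ∩ W| ≤ q` or `|(B∖A) ∩ W| ≤ q`. -/
def UnbreakableIn (G : SimpleGraph V) (U W : Set V) (q k : ℕ) : Prop :=
  ∀ A B : Set V, A ∪ B = U →
    (∀ a ∈ A \ B, ∀ b ∈ B \ A, ¬ G.Adj a b) →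
    (A ∩ B).ncard ≤ k →
    ((A \ B) ∩ W).ncard ≤ q ∨ ((B \ A) ∩ W).ncard ≤ q

/-- `W` is `(q,k)`-unbreakable in `G`. -/
def Unbreakable (G : SimpleGraph V) (W : Set V) (q k : ℕ) : Prop :=
  UnbreakableIn G Set.univ W q k

/-- `x` and `y` lie in the same connected component of `G − W`. -/
def ReachAvoid (G : SimpleGraph V) (W : Set V) (x y : V) : Prop :=
  ∃ (hx : x ∈ Wᶜ) (hy : y ∈ Wᶜ), (G.induce Wᶜ).Reachable ⟨x, hx⟩ ⟨y, hy⟩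

/-- `W` is an `X–Y` separator: no connected component of `G − W` contains
a vertex of `X∖W` and a vertex of `Y∖W`. -/
def IsSeparator (G : SimpleGraph V) (X Y W : Set V) : Prop :=
  ∀ x ∈ X \ W, ∀ y ∈ Y \ W, ¬ ReachAvoid G W x y

/-- `R_{G−W}(X∖W)`: the set of vertices reachable from `X∖W` in `G − W`. -/
def reachSet (G : SimpleGraph V) (W X : Set V) : Set V :=
  {y | ∃ x ∈ X \ W, ReachAvoid G W x y}

/-- `W` is an important `X–Y` separator. -/
def IsImportantSeparator (G : SimpleGraph V) (X Y W : Set V) : Prop :=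
  IsSeparator G X Y W ∧
  (∀ W' ⊆ W, IsSeparator G X Y W' → W' = W) ∧
  ∀ W' : Set V, IsSeparator G X Y W' → W'.ncard ≤ W.ncard →
    ¬ reachSet G W X ⊂ reachSet G W' X

/-- A chip (w.r.t. `G`, `k` and `S`): `G[C]` is connected, `|N_G(C)| ≤ 3k`,
and `N_G(C)` is an important `C–S` separator. -/
def IsChip (G : SimpleGraph V) (k : ℕ) (S C : Set V) : Prop :=
  (G.induce C).Connected ∧ (setNbhd G C).ncard ≤ 3 * k ∧
  IsImportantSeparator G C S (setNbhd G C)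

/-- The family of all inclusion-wise maximal chips. -/
def maximalChips (G : SimpleGraph V) (k : ℕ) (S : Set V) : Set (Set V) :=
  {C | IsChip G k S C ∧ ∀ C', IsChip G k S C' → C ⊆ C' → C' = C}

/-- Two vertex sets touch: they intersect or some edge joins them. -/
def Touches (G : SimpleGraph V) (C₁ C₂ : Set V) : Prop :=
  (C₁ ∩ C₂).Nonempty ∨ ∃ u ∈ C₁, ∃ v ∈ C₂, G.Adj u v

/-- `D` is a connected component of `G − A`: a maximal set disjoint from `A`
inducing a connected subgraph. -/
def IsCompOf (G : SimpleGraph V) (A D : Set V) : Prop :=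
  D ⊆ Aᶜ ∧ (G.induce D).Connected ∧
  ∀ D', D ⊆ D' → D' ⊆ Aᶜ → (G.induce D').Connected → D' = D

/-- The set `A = (⋂_{C ∈ 𝒞} V(G) ∖ N[C]) ∪ ⋃_{C ∈ 𝒞} N(C)` built from the
maximal chips (equals `V(G)` when there are no chips). -/
def chipBag (G : SimpleGraph V) (k : ℕ) (S : Set V) : Set V :=
  (⋂ C ∈ maximalChips G k S, (closedNbhd G C)ᶜ) ∪
    ⋃ C ∈ maximalChips G k S, setNbhd G C

/-- `η(k) = 3k·(3k·4^{3k}+1)`. -/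
def etaB (k : ℕ) : ℕ := 3 * k * (3 * k * 4 ^ (3 * k) + 1)

/-- `τ(k) = (3k)²·8^{3k} + 2k`. -/
def tauB (k : ℕ) : ℕ := (3 * k) ^ 2 * 8 ^ (3 * k) + 2 * k

/-- `τ′(k) = τ + (C(τ+k,2)·k + k)·k·η`. -/
def tauB' (k : ℕ) : ℕ :=
  tauB k + ((tauB k + k).choose 2 * k + k) * k * etaB k

/-- The tree graph determined by a parent function. -/
def parentGraph {T : Type*} (parent : T → T) : SimpleGraph T where
  Adj t s := t ≠ s ∧ (parent t = s ∨ parent s = t)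
  symm := by constructor; intro t s h; exact ⟨h.1.symm, h.2.symm⟩
  loopless := by constructor; intro t h; exact h.1 rfl

/-- The descendants of `t` (including `t` itself). -/
def descSet {T : Type*} (parent : T → T) (t : T) : Set T :=
  {u | ∃ n : ℕ, parent^[n] u = t}

/-- `γ(t) = ⋃_{u ⪯ t} β(u)`. -/
def gammaSet {T : Type*} (parent : T → T) (β : T → Set V) (t : T) : Set V :=
  ⋃ u ∈ descSet parent t, β u

/-- `σ(t) = ∅` for the root, `β(t) ∩ β(parent t)` otherwise. -/
def sigmaSet {T : Type*} [DecidableEq T] (root : T) (parent : T → T)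
    (β : T → Set V) (t : T) : Set V :=
  if t = root then ∅ else β t ∩ β (parent t)

/-- `(T,β)` (a rooted tree given by `root` and `parent`, with bags `β`)
is a tree decomposition of `G`. -/
structure IsTreeDecomp (G : SimpleGraph V) {T : Type*} (root : T) (parent : T → T)
    (β : T → Set V) : Prop where
  parent_root : parent root = root
  reaches_root : ∀ t : T, ∃ n : ℕ, parent^[n] t = root
  bags_connected : ∀ v : V, ((parentGraph parent).induce {t | v ∈ β t}).Connected
  edge_in_bag : ∀ u v : V, G.Adj u v → ∃ t : T, u ∈ β t ∧ v ∈ β t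

/-!
A separation `(A, B)` of order at most `k` yields the separator `A ∩ B` between any vertices
of `A ∖ B` and of `B ∖ A`. Conversely, if `Z` separates `X₀` from `Y₀`, let `R` be the set of
vertices reachable from `X₀` in `G − Z`; then `(R ∪ Z, Rᶜ)` is a separation of order `|Z|`
with `X₀ ⊆ R` and `Y₀` disjoint from `R ∪ Z`.
-/

section Separators

variable {G : SimpleGraph V} {X Y Z : Set V}

lemma reachAvoid_refl {x : V} (hx : x ∉ Z) : ReachAvoid G Z x x :=
  ⟨hx, hx, Reachable.refl _⟩

lemma ReachAvoid.trans_adj {x y b : V} (h : ReachAvoid G Z x y) (hb : b ∉ Z)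
    (hyb : G.Adj y b) : ReachAvoid G Z x b := by
  obtain ⟨hx, hy, hr⟩ := h
  have hyb' : (G.induce Zᶜ).Adj ⟨y, hy⟩ ⟨b, hb⟩ := hyb
  exact ⟨hx, hb, hr.trans hyb'.reachable⟩

lemma reachSet_subset_compl : reachSet G Z X ⊆ Zᶜ := by
  rintro y ⟨x, -, -, hy, -⟩
  exact hy

lemma sdiff_subset_reachSet : X \ Z ⊆ reachSet G Z X :=
  fun x hx => ⟨x, hx, reachAvoid_refl hx.2⟩

lemma mem_reachSet_of_adj {a b : V} (ha : a ∈ reachSet G Z X) (hb : b ∉ Z) (hab : G.Adj a b) :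
    b ∈ reachSet G Z X := by
  obtain ⟨x, hx, hxa⟩ := ha
  exact ⟨x, hx, hxa.trans_adj hb hab⟩

lemma IsSeparator.notMem_reachSet (h : IsSeparator G X Y Z) {y : V} (hy : y ∈ Y \ Z) :
    y ∉ reachSet G Z X := by
  rintro ⟨x, hx, hxy⟩
  exact h x hx y hy hxy

lemma IsSeparator.mono {X' Y' : Set V} (h : IsSeparator G X Y Z) (hX : X' ⊆ X) (hY : Y' ⊆ Y) :
    IsSeparator G X' Y' Z :=
  fun x hx y hy => h x ⟨hX hx.1, hx.2⟩ y ⟨hY hy.1, hy.2⟩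

lemma isSeparator_inter_of_separation {A B : Set V} (hAB : A ∪ B = Set.univ)
    (hE : ∀ a ∈ A \ B, ∀ b ∈ B \ A, ¬ G.Adj a b) :
    IsSeparator G (A \ B) (B \ A) (A ∩ B) := by
  rintro x hx y hy ⟨hx', hy', ⟨p⟩⟩
  obtain ⟨d, -, hd_fst, hd_snd⟩ :=
    p.exists_boundary_dart {v | (v : V) ∈ A \ B} hx.1 fun hyA => hy.1.2 hyA.1
  have hd_side : (d.snd : V) ∈ B \ A := by
    have hcover : (d.snd : V) ∈ A ∪ B := hAB ▸ Set.mem_univ _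
    have hout := d.snd.2
    simp only [Set.mem_ofPred_eq, Set.mem_sdiff, Set.mem_compl_iff, Set.mem_inter_iff,
      Set.mem_union] at hd_snd hout hcover ⊢
    tauto
  exact hE _ hd_fst _ hd_side d.adj

end Separators

lemma Unbreakable.reachSet_inter_ncard_le {G : SimpleGraph V} {W Z : Set V} {q k : ℕ}
    (h : Unbreakable G W q k) (hZ : Z.ncard ≤ k) (X : Set V) :
    (reachSet G Z X ∩ W).ncard ≤ q ∨ ((reachSet G Z X ∪ Z)ᶜ ∩ W).ncard ≤ q := by
  set R := reachSet G Z X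
  have hRZ : R ⊆ Zᶜ := reachSet_subset_compl
  have hleft : (R ∪ Z) \ Rᶜ = R := by
    rw [Set.sdiff_compl, Set.union_inter_cancel_left]
  have hright : Rᶜ \ (R ∪ Z) = (R ∪ Z)ᶜ := by
    rw [Set.sdiff_eq_compl_inter, Set.inter_eq_left]
    exact Set.compl_subset_compl.2 Set.subset_union_left
  have hsep : (R ∪ Z) ∩ Rᶜ = Z := by
    rw [Set.union_inter_distrib_right, Set.inter_compl_self, Set.empty_union, Set.inter_eq_left]
    exact fun z hz hzR => hRZ hzR hz
  have := h (R ∪ Z) Rᶜ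
    (by rw [Set.union_right_comm, Set.union_compl_self, Set.univ_union]) ?_ (by rwa [hsep])
  · rwa [hleft, hright] at this
  · rw [hleft, hright]
    intro a ha b hb hab
    simp only [Set.compl_union, Set.mem_inter_iff, Set.mem_compl_iff] at hb
    exact hb.1 (mem_reachSet_of_adj ha hb.2 hab)

theorem breakable_iff_separator_general {V : Type*} [Fintype V]
    (G : SimpleGraph V) (A : Set V) (q k : ℕ) :
    ¬ Unbreakable G A q k ↔
      ∃ X₀ Y₀ Z : Set V,
        X₀ ⊆ A ∧ Y₀ ⊆ A ∧ Disjoint X₀ Y₀ ∧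
        X₀.ncard = q + 1 ∧ Y₀.ncard = q + 1 ∧
        Z ⊆ (X₀ ∪ Y₀)ᶜ ∧ Z.ncard ≤ k ∧ IsSeparator G X₀ Y₀ Z := by
  constructor
  · intro h
    simp only [Unbreakable, UnbreakableIn, not_forall, not_or, not_le] at h
    obtain ⟨A', B', hU, hE, hk, hA, hB⟩ := h
    obtain ⟨X₀, hX₀, hX₀card⟩ := Set.exists_subset_card_eq hA
    obtain ⟨Y₀, hY₀, hY₀card⟩ := Set.exists_subset_card_eq hB
    refine ⟨X₀, Y₀, A' ∩ B', fun x hx => (hX₀ hx).2, fun y hy => (hY₀ hy).2,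
      Set.disjoint_left.2 fun x hx hy => (hY₀ hy).1.2 (hX₀ hx).1.1, hX₀card, hY₀card,
      fun z hz hzXY => hzXY.elim (fun hx => (hX₀ hx).1.2 hz.2) (fun hy => (hY₀ hy).1.2 hz.1),
      hk, (isSeparator_inter_of_separation hU hE).mono (fun x hx => (hX₀ hx).1)
        (fun y hy => (hY₀ hy).1)⟩
  · rintro ⟨X₀, Y₀, Z, hXA, hYA, -, hXcard, hYcard, hZ, hZk, hsep⟩ h
    have hXZ : ∀ x ∈ X₀, x ∉ Z := fun x hx hxZ => hZ hxZ (Or.inl hx)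
    have hYZ : ∀ y ∈ Y₀, y ∉ Z := fun y hy hyZ => hZ hyZ (Or.inr hy)
    have hX : X₀ ⊆ reachSet G Z X₀ ∩ A :=
      fun x hx => ⟨sdiff_subset_reachSet ⟨hx, hXZ x hx⟩, hXA hx⟩
    have hY : Y₀ ⊆ (reachSet G Z X₀ ∪ Z)ᶜ ∩ A := fun y hy =>
      ⟨fun hyRZ => hyRZ.elim (hsep.notMem_reachSet ⟨hy, hYZ y hy⟩) (hYZ y hy), hYA hy⟩
    rcases h.reachSet_inter_ncard_le hZk X₀ with hXsmall | hYsmall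
    · have := Set.ncard_le_ncard hX (Set.toFinite _)
      omega
    · have := Set.ncard_le_ncard hY (Set.toFinite _)
      omega

/-- characterization of `(q,k)`-breakability (Lemma 2.7). -/
theorem breakable_iff_separator {V : Type*} [Fintype V] [DecidableEq V]
    (G : SimpleGraph V) (A : Set V) (q k : ℕ) :
    ¬ Unbreakable G A q k ↔
      ∃ X₀ Y₀ Z : Set V,
        X₀ ⊆ A ∧ Y₀ ⊆ A ∧ Disjoint X₀ Y₀ ∧
        X₀.ncard = q + 1 ∧ Y₀.ncard = q + 1 ∧
        Z ⊆ (X₀ ∪ Y₀)ᶜ ∧ Z.ncard ≤ k ∧ IsSeparator G X₀ Y₀ Z :=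
  breakable_iff_separator_general G A q k
end

section
/- Let G be a finite simple graph on n vertices, k a positive integer, and S ⊆ V(G). Then the family 𝒞 of all inclusion-wise maximal chips (with respect to G, k and S) has cardinality at most 4^{3k} · n. -/
/-!
A chip `C` is connected, so it is the set reachable from any of its vertices `v` avoiding
`N(C)`, and `N(C)` is an important `{v}–S` separator with at most `3k` vertices. So it suffices
that there are at most `4^ℓ` important `X–Y` separators of size at most `ℓ`. Minimum-cut sides
that are closed under reachability are closed under union (submodularity of `|N(·)|`), so there
is a greatest one, `M`, and every important separator leaves `M` reachable. Branching on a
vertex `v ∈ N(M)` — either `v` is in the separator and gets deleted from the graph, or `v` joins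
the source and the minimum cut `λ` strictly grows — decreases `2ℓ - λ`, whence `2^(2ℓ)`.
-/

open SimpleGraph

variable {V : Type*}

section Reach

variable {G : SimpleGraph V} {W W' X X' Y A C : Set V} {x y z v : V}

theorem ReachAvoid.trans (h : ReachAvoid G W x y) (h' : ReachAvoid G W y z) :
    ReachAvoid G W x z :=
  ⟨h.1, h'.2.1, h.2.2.trans h'.2.2⟩

theorem ReachAvoid.of_adj (h : G.Adj x y) (hx : x ∉ W) (hy : y ∉ W) : ReachAvoid G W x y :=
  ⟨hx, hy, (show (G.induce Wᶜ).Adj ⟨x, hx⟩ ⟨y, hy⟩ from h).reachable⟩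

theorem ReachAvoid.mem_of_closed (hA : ∀ a ∈ A, ∀ b, G.Adj a b → b ∉ W → b ∈ A)
    (hx : x ∈ A) (h : ReachAvoid G W x y) : y ∈ A := by
  obtain ⟨hx', hy', ⟨p⟩⟩ := h
  suffices ∀ (a b : ↥Wᶜ), (G.induce Wᶜ).Walk a b → a.1 ∈ A → b.1 ∈ A from this _ _ p hx
  intro a b p
  induction p with
  | nil => exact id
  | @cons _ b _ hab _ ih => exact fun ha => ih (hA _ ha _ hab b.2)

theorem mem_reachSet_of_mem (hx : x ∈ X) (hxW : x ∉ W) : x ∈ reachSet G W X :=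
  ⟨x, ⟨hx, hxW⟩, hxW, hxW, .rfl⟩

theorem disjoint_reachSet : Disjoint W (reachSet G W X) :=
  Set.disjoint_right.mpr fun _ ⟨_, _, h⟩ => h.2.1

theorem mem_reachSet_of_adj_s6 (hy : y ∈ reachSet G W X) (h : G.Adj y z) (hz : z ∉ W) :
    z ∈ reachSet G W X := by
  obtain ⟨x, hx, hxy⟩ := hy
  exact ⟨x, hx, hxy.trans (.of_adj h hxy.2.1 hz)⟩

theorem subset_reachSet (hWX : Disjoint W X) : X ⊆ reachSet G W X :=
  fun _ hx => mem_reachSet_of_mem hx (Set.disjoint_right.mp hWX hx)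

theorem reachSet_subset_of_closed (hX : X \ W ⊆ A)
    (hA : ∀ a ∈ A, ∀ b, G.Adj a b → b ∉ W → b ∈ A) : reachSet G W X ⊆ A :=
  fun _ ⟨_, hx, h⟩ => h.mem_of_closed hA (hX hx)

theorem reachSet_subset_reachSet (h : Disjoint W' (reachSet G W X)) :
    reachSet G W X ⊆ reachSet G W' X := by
  have hstep : ∀ a ∈ reachSet G W X ∩ reachSet G W' X, ∀ b, G.Adj a b → b ∉ W →
      b ∈ reachSet G W X ∩ reachSet G W' X := by
    intro a ha b hab hb
    have hbR := mem_reachSet_of_adj_s6 ha.1 hab hb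
    exact ⟨hbR, mem_reachSet_of_adj_s6 ha.2 hab (Set.disjoint_right.mp h hbR)⟩
  refine fun y hy => (reachSet_subset_of_closed (fun x hx => ?_) hstep hy).2
  have hxR := mem_reachSet_of_mem (G := G) hx.1 hx.2
  exact ⟨hxR, mem_reachSet_of_mem hx.1 (Set.disjoint_right.mp h hxR)⟩

theorem reachSet_mono (h : X ⊆ X') : reachSet G W X ⊆ reachSet G W X' :=
  fun _ ⟨x, hx, hxy⟩ => ⟨x, ⟨h hx.1, hx.2⟩, hxy⟩

theorem reachSet_eq_of_subset (h₁ : X ⊆ X') (h₂ : X' ⊆ reachSet G W X) :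
    reachSet G W X' = reachSet G W X := by
  refine subset_antisymm (fun y ⟨x, hx, hxy⟩ => ?_) (reachSet_mono h₁)
  obtain ⟨x₀, hx₀, hx₀x⟩ := h₂ hx.1
  exact ⟨x₀, hx₀, hx₀x.trans hxy⟩

theorem subset_reachSet_of_connected (hC : (G.induce C).Connected) (hv : v ∈ C)
    (hWC : Disjoint W C) : C ⊆ reachSet G W {v} := by
  have hCW : C ⊆ Wᶜ := Set.subset_compl_iff_disjoint_left.mpr hWC
  intro x hx
  exact ⟨v, ⟨rfl, hCW hv⟩, hCW hv, hCW hx,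
    (hC.preconnected ⟨v, hv⟩ ⟨x, hx⟩).map (G.induceHomOfLE hCW).toHom⟩

theorem reachSet_singleton_eq (hC : (G.induce C).Connected) (hv : v ∈ C)
    (hWC : Disjoint W C) : reachSet G W {v} = reachSet G W C :=
  (reachSet_eq_of_subset (Set.singleton_subset_iff.mpr hv)
    (subset_reachSet_of_connected hC hv hWC)).symm

theorem isSeparator_iff_disjoint : IsSeparator G X Y W ↔ Disjoint (reachSet G W X) Y := by
  refine ⟨fun h => Set.disjoint_left.mpr fun y ⟨x, hx, hxy⟩ hy => ?_,
    fun h x hx y hy hxy => Set.disjoint_left.mp h ⟨x, hx, hxy⟩ hy.1⟩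
  exact h x hx y ⟨hy, hxy.2.1⟩ hxy

theorem IsSeparator.anti (h : X' ⊆ X) (hsep : IsSeparator G X Y W) : IsSeparator G X' Y W :=
  fun x hx => hsep x ⟨h hx.1, hx.2⟩

theorem isSeparator_singleton_iff (hC : (G.induce C).Connected) (hv : v ∈ C)
    (hWC : Disjoint W C) : IsSeparator G {v} Y W ↔ IsSeparator G C Y W := by
  rw [isSeparator_iff_disjoint, isSeparator_iff_disjoint, reachSet_singleton_eq hC hv hWC]

end Reach

section Cut

variable {G : SimpleGraph V} {W X Y A B M : Set V} {v : V}

theorem disjoint_setNbhd : Disjoint (setNbhd G A) A :=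
  Set.disjoint_left.mpr fun _ hv => hv.1

theorem reachSet_setNbhd_subset (hXA : X ⊆ A) : reachSet G (setNbhd G A) X ⊆ A :=
  reachSet_subset_of_closed (Set.sdiff_subset.trans hXA)
    fun a ha _ hab hb => by_contra fun hbA => hb ⟨hbA, a, ha, hab⟩

theorem setNbhd_reachSet_subset : setNbhd G (reachSet G W X) ⊆ W :=
  fun _ ⟨hu, _, hz, hzu⟩ => by_contra fun huW => hu (mem_reachSet_of_adj_s6 hz hzu huW)

theorem ncard_setNbhd_union_add_ncard_setNbhd_inter_le [Finite V] (A B : Set V) :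
    (setNbhd G (A ∪ B)).ncard + (setNbhd G (A ∩ B)).ncard ≤
      (setNbhd G A).ncard + (setNbhd G B).ncard := by
  have hunion : setNbhd G (A ∪ B) ∪ setNbhd G (A ∩ B) ⊆ setNbhd G A ∪ setNbhd G B := by
    rintro u (⟨hu, w, hw | hw, hwu⟩ | ⟨hu, w, hw, hwu⟩)
    · exact .inl ⟨fun h => hu (.inl h), w, hw, hwu⟩
    · exact .inr ⟨fun h => hu (.inr h), w, hw, hwu⟩
    · by_cases huA : u ∈ A
      · exact .inr ⟨fun huB => hu ⟨huA, huB⟩, w, hw.2, hwu⟩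
      · exact .inl ⟨huA, w, hw.1, hwu⟩
  have hinter : setNbhd G (A ∪ B) ∩ setNbhd G (A ∩ B) ⊆ setNbhd G A ∩ setNbhd G B :=
    fun u ⟨⟨hu, _⟩, _, w, hw, hwu⟩ =>
      ⟨⟨fun h => hu (.inl h), w, hw.1, hwu⟩, fun h => hu (.inr h), w, hw.2, hwu⟩
  rw [← Set.ncard_union_add_ncard_inter, ← Set.ncard_union_add_ncard_inter (setNbhd G A)]
  exact add_le_add (Set.ncard_le_ncard hunion) (Set.ncard_le_ncard hinter)

/-- The sides `A` of `X–Y` cuts; the cut itself is `setNbhd G A`. -/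
def cutSides (X Y : Set V) : Set (Set V) := {A | X ⊆ A ∧ Disjoint A Y}

/-- When `X` and `Y` meet there are no cut sides, and this is the junk value `sInf ∅ = 0`. -/
noncomputable def minCut (G : SimpleGraph V) (X Y : Set V) : ℕ :=
  sInf ((fun A => (setNbhd G A).ncard) '' cutSides X Y)

theorem minCut_le (hA : A ∈ cutSides X Y) : minCut G X Y ≤ (setNbhd G A).ncard :=
  Nat.sInf_le ⟨A, hA, rfl⟩

theorem exists_ncard_setNbhd_eq_minCut (hXY : Disjoint X Y) :
    ∃ A ∈ cutSides X Y, (setNbhd G A).ncard = minCut G X Y := by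
  have hne : (cutSides X Y).Nonempty :=
    ⟨Yᶜ, Set.subset_compl_iff_disjoint_right.mpr hXY, disjoint_compl_left⟩
  exact Nat.sInf_mem (hne.image fun A => (setNbhd G A).ncard)

theorem disjoint_of_minCut_pos (h : 0 < minCut G X Y) : Disjoint X Y := by
  by_contra hXY
  have hempty : cutSides X Y = ∅ :=
    Set.eq_empty_of_forall_notMem fun A hA => hXY (hA.2.mono_left hA.1)
  simp [minCut, hempty] at h

theorem isSeparator_setNbhd (hA : A ∈ cutSides X Y) : IsSeparator G X Y (setNbhd G A) :=
  isSeparator_iff_disjoint.mpr (hA.2.mono_left (reachSet_setNbhd_subset hA.1))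

theorem reachSet_mem_cutSides (hWX : Disjoint W X) (hsep : IsSeparator G X Y W) :
    reachSet G W X ∈ cutSides X Y :=
  ⟨subset_reachSet hWX, isSeparator_iff_disjoint.mp hsep⟩

theorem reachSet_setNbhd_singleton_of_connected (hA : (G.induce A).Connected) (hv : v ∈ A) :
    reachSet G (setNbhd G A) {v} = A :=
  subset_antisymm (reachSet_setNbhd_subset (Set.singleton_subset_iff.mpr hv))
    (subset_reachSet_of_connected hA hv disjoint_setNbhd)

theorem minCut_le_ncard [Finite V] (hWX : Disjoint W X) (hsep : IsSeparator G X Y W) :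
    minCut G X Y ≤ W.ncard :=
  (minCut_le (reachSet_mem_cutSides hWX hsep)).trans (Set.ncard_le_ncard setNbhd_reachSet_subset)

structure IsTightSide (G : SimpleGraph V) (X Y A : Set V) : Prop where
  mem_cutSides : A ∈ cutSides X Y
  ncard_setNbhd : (setNbhd G A).ncard = minCut G X Y
  reachSet_setNbhd : reachSet G (setNbhd G A) X = A

theorem IsTightSide.subset_reachSet_of_disjoint (hM : IsTightSide G X Y M)
    (hWM : Disjoint W M) : M ⊆ reachSet G W X := by
  have := reachSet_subset_reachSet (G := G) (X := X) (by rwa [hM.reachSet_setNbhd])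
  rwa [hM.reachSet_setNbhd] at this

theorem isTightSide_reachSet [Finite V] (hA : A ∈ cutSides X Y)
    (hmin : (setNbhd G A).ncard = minCut G X Y) :
    IsTightSide G X Y (reachSet G (setNbhd G A) X) := by
  set R := reachSet G (setNbhd G A) X
  have hR : R ∈ cutSides X Y :=
    reachSet_mem_cutSides (disjoint_setNbhd.mono_right hA.1) (isSeparator_setNbhd hA)
  have hNR : (setNbhd G R).ncard ≤ (setNbhd G A).ncard :=
    Set.ncard_le_ncard setNbhd_reachSet_subset
  refine ⟨hR, le_antisymm (hmin ▸ hNR) (minCut_le hR), ?_⟩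
  exact subset_antisymm (reachSet_setNbhd_subset hR.1)
    (reachSet_subset_reachSet disjoint_setNbhd)

theorem IsTightSide.union [Finite V] (hA : IsTightSide G X Y A) (hB : IsTightSide G X Y B) :
    IsTightSide G X Y (A ∪ B) := by
  have hU : A ∪ B ∈ cutSides X Y :=
    ⟨hA.mem_cutSides.1.trans Set.subset_union_left,
      Set.disjoint_union_left.mpr ⟨hA.mem_cutSides.2, hB.mem_cutSides.2⟩⟩
  have hI : A ∩ B ∈ cutSides X Y :=
    ⟨Set.subset_inter hA.mem_cutSides.1 hB.mem_cutSides.1,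
      hA.mem_cutSides.2.mono_left Set.inter_subset_left⟩
  have hUmin : (setNbhd G (A ∪ B)).ncard = minCut G X Y := by
    have hsub := ncard_setNbhd_union_add_ncard_setNbhd_inter_le (G := G) A B
    have := minCut_le (G := G) hU
    have := minCut_le (G := G) hI
    rw [hA.ncard_setNbhd, hB.ncard_setNbhd] at hsub
    omega
  refine ⟨hU, hUmin, subset_antisymm (reachSet_setNbhd_subset hU.1) ?_⟩
  exact Set.union_subset
    (hA.subset_reachSet_of_disjoint (disjoint_setNbhd.mono_right Set.subset_union_left))
    (hB.subset_reachSet_of_disjoint (disjoint_setNbhd.mono_right Set.subset_union_right))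

theorem exists_greatest_isTightSide [Finite V] (hXY : Disjoint X Y) :
    ∃ M, IsTightSide G X Y M ∧ ∀ A, IsTightSide G X Y A → A ⊆ M := by
  obtain ⟨A, hA, hmin⟩ := exists_ncard_setNbhd_eq_minCut (G := G) hXY
  obtain ⟨M, hM, hmax⟩ := Set.Finite.exists_maximalFor id {A | IsTightSide G X Y A}
    (Set.toFinite _) ⟨_, isTightSide_reachSet hA hmin⟩
  exact ⟨M, hM, fun A hA =>
    Set.subset_union_left.trans (hmax (hA.union hM) Set.subset_union_right)⟩

end Cut

/-- Unlike `IsImportantSeparator`, competitors must be disjoint from `X`: this weaker notion is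
the one preserved by the branching. -/
structure IsImportantCut (G : SimpleGraph V) (X Y W : Set V) : Prop where
  disjoint : Disjoint W X
  isSeparator : IsSeparator G X Y W
  minimal : ∀ W' ⊆ W, IsSeparator G X Y W' → W' = W
  important : ∀ W', Disjoint W' X → IsSeparator G X Y W' → W'.ncard ≤ W.ncard →
    ¬ reachSet G W X ⊂ reachSet G W' X

def importantCuts (G : SimpleGraph V) (ℓ : ℕ) (X Y : Set V) : Set (Set V) :=
  {W | IsImportantCut G X Y W ∧ W.ncard ≤ ℓ}

section Important

variable {G : SimpleGraph V} {W X Y M : Set V} {v : V}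

theorem IsImportantCut.disjoint_left_right (hW : IsImportantCut G X Y W) : Disjoint X Y :=
  (isSeparator_iff_disjoint.mp hW.isSeparator).mono_left (subset_reachSet hW.disjoint)

/-- If `M ⊄ reachSet G W X`, uncrossing `reachSet G W X` with `M` gives a cut no larger than `W`
that reaches strictly more. -/
theorem IsTightSide.subset_reachSet [Finite V] (hM : IsTightSide G X Y M)
    (hW : IsImportantCut G X Y W) : M ⊆ reachSet G W X := by
  set R := reachSet G W X
  have hR : R ∈ cutSides X Y := reachSet_mem_cutSides hW.disjoint hW.isSeparator
  have hU : R ∪ M ∈ cutSides X Y :=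
    ⟨hR.1.trans Set.subset_union_left,
      Set.disjoint_union_left.mpr ⟨hR.2, hM.mem_cutSides.2⟩⟩
  have hI : R ∩ M ∈ cutSides X Y :=
    ⟨Set.subset_inter hR.1 hM.mem_cutSides.1, hR.2.mono_left Set.inter_subset_left⟩
  have hUcard : (setNbhd G (R ∪ M)).ncard ≤ W.ncard := by
    have hsub := ncard_setNbhd_union_add_ncard_setNbhd_inter_le (G := G) R M
    have := minCut_le (G := G) hI
    have : (setNbhd G R).ncard ≤ W.ncard := Set.ncard_le_ncard setNbhd_reachSet_subset
    rw [hM.ncard_setNbhd] at hsub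
    omega
  have hdisj : Disjoint (setNbhd G (R ∪ M)) (R ∪ M) := disjoint_setNbhd
  have hRsub : R ⊆ reachSet G (setNbhd G (R ∪ M)) X :=
    reachSet_subset_reachSet (hdisj.mono_right Set.subset_union_left)
  have hMsub : M ⊆ reachSet G (setNbhd G (R ∪ M)) X :=
    hM.subset_reachSet_of_disjoint (hdisj.mono_right Set.subset_union_right)
  by_contra hMR
  exact hW.important _ (hdisj.mono_right hU.1) (isSeparator_setNbhd hU) hUcard
    (ssubset_of_subset_not_superset hRsub fun h => hMR (hMsub.trans h))

theorem reachSet_insert_eq [Finite V] (hM : IsTightSide G X Y M) (hv : v ∈ setNbhd G M)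
    (hW : Disjoint W (insert v M)) : reachSet G W (insert v M) = reachSet G W X := by
  have hMR : M ⊆ reachSet G W X :=
    hM.subset_reachSet_of_disjoint (hW.mono_right (Set.subset_insert v M))
  obtain ⟨-, m, hm, hmv⟩ := hv
  have hvR : v ∈ reachSet G W X :=
    mem_reachSet_of_adj_s6 (hMR hm) hmv (Set.disjoint_right.mp hW (Set.mem_insert v M))
  exact reachSet_eq_of_subset (hM.mem_cutSides.1.trans (Set.subset_insert v M))
    (Set.insert_subset hvR hMR)

theorem IsImportantCut.insert_tightSide [Finite V] (hM : IsTightSide G X Y M)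
    (hv : v ∈ setNbhd G M) (hW : IsImportantCut G X Y W) (hvW : v ∉ W) :
    IsImportantCut G (insert v M) Y W := by
  have hXM : X ⊆ insert v M := hM.mem_cutSides.1.trans (Set.subset_insert v M)
  have hWM : Disjoint W (insert v M) := Set.disjoint_insert_right.mpr
    ⟨hvW, disjoint_reachSet.mono_right (hM.subset_reachSet hW)⟩
  refine ⟨hWM, ?_, fun W' hW' hsep => hW.minimal W' hW' (hsep.anti hXM), ?_⟩
  · rw [isSeparator_iff_disjoint, reachSet_insert_eq hM hv hWM]
    exact isSeparator_iff_disjoint.mp hW.isSeparator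
  · intro W' hW'M hsep hcard
    rw [reachSet_insert_eq hM hv hWM, reachSet_insert_eq hM hv hW'M]
    exact hW.important W' (hW'M.mono_right hXM) (hsep.anti hXM) hcard

theorem minCut_lt_minCut_insert [Finite V] (hM : IsTightSide G X Y M)
    (hMmax : ∀ A, IsTightSide G X Y A → A ⊆ M) (hv : v ∈ setNbhd G M) (hvY : v ∉ Y) :
    minCut G X Y < minCut G (insert v M) Y := by
  have hvMY : Disjoint (insert v M) Y := Set.disjoint_insert_left.mpr ⟨hvY, hM.mem_cutSides.2⟩
  obtain ⟨A, hA, hAmin⟩ := exists_ncard_setNbhd_eq_minCut (G := G) hvMY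
  have hAX : A ∈ cutSides X Y :=
    ⟨hM.mem_cutSides.1.trans ((Set.subset_insert v M).trans hA.1), hA.2⟩
  rw [← hAmin]
  refine (minCut_le hAX).lt_of_ne fun heq =>
    hv.1 (hMmax _ (isTightSide_reachSet hAX heq.symm) ?_)
  have hvA : v ∈ A := hA.1 (Set.mem_insert v M)
  exact reachSet_insert_eq hM hv (disjoint_setNbhd.mono_right hA.1) ▸
    mem_reachSet_of_mem (Set.mem_insert v M) (fun h => h.1 hvA)

end Important

section Delete

variable {G : SimpleGraph V} {W X Y : Set V} {v : V}

theorem reachSet_deleteIncidenceSet (hvX : v ∉ X) :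
    reachSet (G.deleteIncidenceSet v) W X = reachSet G (insert v W) X := by
  refine subset_antisymm (reachSet_subset_of_closed ?_ ?_) ?_
  · exact fun x hx => mem_reachSet_of_mem hx.1 (by grind)
  · intro a ha b hab hb
    rw [deleteIncidenceSet_adj] at hab
    exact mem_reachSet_of_adj_s6 ha hab.1 (by grind)
  -- `v` is isolated in the smaller graph, so it is never reached from `X`.
  · refine fun y hy => (reachSet_subset_of_closed (A := reachSet _ W X \ {v}) ?_ ?_ hy).1
    · exact fun x hx => ⟨mem_reachSet_of_mem hx.1 (by grind), by grind⟩
    · intro a ha b hab hb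
      have hab' : (G.deleteIncidenceSet v).Adj a b := by
        rw [deleteIncidenceSet_adj]; grind
      exact ⟨mem_reachSet_of_adj_s6 ha.1 hab' (by grind), by grind⟩

theorem isSeparator_deleteIncidenceSet_iff (hvX : v ∉ X) :
    IsSeparator (G.deleteIncidenceSet v) X Y W ↔ IsSeparator G X Y (insert v W) := by
  rw [isSeparator_iff_disjoint, isSeparator_iff_disjoint, reachSet_deleteIncidenceSet hvX]

theorem IsImportantCut.sdiff_singleton [Finite V] (hW : IsImportantCut G X Y W) (hvW : v ∈ W) :
    IsImportantCut (G.deleteIncidenceSet v) X Y (W \ {v}) := by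
  have hvX : v ∉ X := Set.disjoint_left.mp hW.disjoint hvW
  have hinsert : insert v (W \ {v}) = W := Set.insert_sdiff_self_of_mem hvW
  refine ⟨hW.disjoint.mono_left Set.sdiff_subset, ?_, fun W' hW' hsep => ?_, ?_⟩
  · rw [isSeparator_deleteIncidenceSet_iff hvX, hinsert]
    exact hW.isSeparator
  · have hvW' : v ∉ W' := fun h => (hW' h).2 rfl
    rw [← hW.minimal (insert v W') (hinsert ▸ Set.insert_subset_insert hW')
      ((isSeparator_deleteIncidenceSet_iff hvX).mp hsep), Set.insert_sdiff_self_of_notMem hvW']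
  · intro W' hW'X hsep hcard
    have hcard' : (insert v W').ncard ≤ W.ncard := by
      have := Set.ncard_insert_le v W'
      have := Set.ncard_sdiff_singleton_add_one hvW
      omega
    rw [reachSet_deleteIncidenceSet hvX, reachSet_deleteIncidenceSet hvX, hinsert]
    exact hW.important _ (Set.disjoint_insert_left.mpr ⟨hvX, hW'X⟩)
      ((isSeparator_deleteIncidenceSet_iff hvX).mp hsep) hcard'

theorem minCut_le_minCut_deleteIncidenceSet_add_one [Finite V] (hXY : Disjoint X Y)
    (hvX : v ∉ X) : minCut G X Y ≤ minCut (G.deleteIncidenceSet v) X Y + 1 := by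
  obtain ⟨A, hA, hAmin⟩ := exists_ncard_setNbhd_eq_minCut (G := G.deleteIncidenceSet v) hXY
  have hAv : A \ {v} ∈ cutSides X Y :=
    ⟨Set.subset_sdiff_singleton hA.1 hvX, hA.2.mono_left Set.sdiff_subset⟩
  have hN : setNbhd G (A \ {v}) ⊆ insert v (setNbhd (G.deleteIncidenceSet v) A) := by
    rintro u ⟨hu, w, hw, hwu⟩
    by_cases huv : u = v
    · exact .inl huv
    · exact .inr ⟨fun huA => hu ⟨huA, huv⟩, w, hw.1,
        deleteIncidenceSet_adj.mpr ⟨hwu, hw.2, huv⟩⟩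
  calc minCut G X Y ≤ (setNbhd G (A \ {v})).ncard := minCut_le hAv
    _ ≤ (insert v (setNbhd (G.deleteIncidenceSet v) A)).ncard := Set.ncard_le_ncard hN
    _ ≤ minCut (G.deleteIncidenceSet v) X Y + 1 := hAmin ▸ Set.ncard_insert_le _ _

end Delete

section Count

variable {G : SimpleGraph V} {X Y M : Set V} {ℓ : ℕ} {v : V}

theorem importantCuts_eq_empty_of_not_disjoint (h : ¬ Disjoint X Y) :
    importantCuts G ℓ X Y = ∅ :=
  Set.eq_empty_of_forall_notMem fun _ hW => h hW.1.disjoint_left_right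

theorem importantCuts_eq_empty_of_lt_minCut [Finite V] (h : ℓ < minCut G X Y) :
    importantCuts G ℓ X Y = ∅ :=
  Set.eq_empty_of_forall_notMem fun _ hW =>
    (minCut_le_ncard hW.1.disjoint hW.1.isSeparator).not_gt (hW.2.trans_lt h)

theorem importantCuts_subset_singleton_empty [Finite V] (h : minCut G X Y = 0) :
    importantCuts G ℓ X Y ⊆ {∅} := by
  intro W hW
  obtain ⟨A, hA, hAmin⟩ := exists_ncard_setNbhd_eq_minCut (G := G) hW.1.disjoint_left_right
  have hNA : setNbhd G A = ∅ := (Set.ncard_eq_zero).mp (hAmin.trans h)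
  exact (hW.1.minimal ∅ (Set.empty_subset W) (hNA ▸ isSeparator_setNbhd hA)).symm

theorem ncard_importantCuts_le_one [Finite V] (h : minCut G X Y = 0 ∨ ℓ < minCut G X Y) :
    (importantCuts G ℓ X Y).ncard ≤ 1 := by
  rcases h with h | h
  · exact (Set.ncard_le_ncard (importantCuts_subset_singleton_empty h)).trans
      (Set.ncard_singleton _).le
  · simp [importantCuts_eq_empty_of_lt_minCut h]

theorem ncard_importantCuts_inter_le [Finite V] (v : V) :
    (importantCuts G ℓ X Y ∩ {W | v ∈ W}).ncard ≤
      (importantCuts (G.deleteIncidenceSet v) (ℓ - 1) X Y).ncard := by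
  refine Set.ncard_le_ncard_of_injOn (· \ {v}) (fun W hW => ⟨hW.1.1.sdiff_singleton hW.2, ?_⟩)
    (Set.insert_erase_invOn.1.injOn.mono Set.inter_subset_right)
  have := Set.ncard_sdiff_singleton_add_one (show v ∈ W from hW.2)
  have := hW.1.2
  omega

theorem importantCuts_sdiff_subset [Finite V] (hM : IsTightSide G X Y M)
    (hv : v ∈ setNbhd G M) :
    importantCuts G ℓ X Y \ {W | v ∈ W} ⊆ importantCuts G ℓ (insert v M) Y :=
  fun _ hW => ⟨hW.1.1.insert_tightSide hM hv hW.2, hW.1.2⟩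

theorem ncard_importantCuts_le_two_pow [Finite V] (μ : ℕ) (G : SimpleGraph V) (X Y : Set V)
    (ℓ : ℕ) (h : 2 * ℓ ≤ μ + minCut G X Y) : (importantCuts G ℓ X Y).ncard ≤ 2 ^ μ := by
  induction μ generalizing G X Y ℓ with
  | zero => exact ncard_importantCuts_le_one (by omega)
  | succ μ ih =>
    by_cases hdeg : minCut G X Y = 0 ∨ ℓ < minCut G X Y
    · exact (ncard_importantCuts_le_one hdeg).trans Nat.one_le_two_pow
    rw [not_or, not_lt] at hdeg
    have hXY := disjoint_of_minCut_pos (Nat.pos_of_ne_zero hdeg.1)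
    obtain ⟨M, hM, hMmax⟩ := exists_greatest_isTightSide (G := G) hXY
    obtain ⟨v, hv⟩ : (setNbhd G M).Nonempty :=
      Set.nonempty_of_ncard_ne_zero (hM.ncard_setNbhd ▸ hdeg.1)
    have hwith : (importantCuts G ℓ X Y ∩ {W | v ∈ W}).ncard ≤ 2 ^ μ := by
      refine (ncard_importantCuts_inter_le v).trans (ih _ _ _ _ ?_)
      have := minCut_le_minCut_deleteIncidenceSet_add_one (G := G) hXY
        fun hvX => hv.1 (hM.mem_cutSides.1 hvX)
      omega
    have hwithout : (importantCuts G ℓ X Y \ {W | v ∈ W}).ncard ≤ 2 ^ μ := by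
      refine (Set.ncard_le_ncard (importantCuts_sdiff_subset hM hv)).trans ?_
      by_cases hvY : v ∈ Y
      · rw [importantCuts_eq_empty_of_not_disjoint fun h => Set.disjoint_left.mp h
          (Set.mem_insert v M) hvY, Set.ncard_empty]
        exact Nat.zero_le _
      · refine ih _ _ _ _ ?_
        have := minCut_lt_minCut_insert hM hMmax hv hvY
        omega
    rw [← Set.ncard_inter_add_ncard_sdiff_eq_ncard _ {W | v ∈ W}, pow_succ]
    omega

theorem ncard_importantCuts_le [Finite V] (G : SimpleGraph V) (ℓ : ℕ) (X Y : Set V) :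
    (importantCuts G ℓ X Y).ncard ≤ 4 ^ ℓ := by
  simpa [pow_mul] using ncard_importantCuts_le_two_pow (2 * ℓ) G X Y ℓ (by omega)

end Count

section Chip

variable {G : SimpleGraph V} {k : ℕ} {S C : Set V} {v : V}

theorem IsChip.setNbhd_mem_importantCuts (hC : IsChip G k S C) (hv : v ∈ C) :
    setNbhd G C ∈ importantCuts G (3 * k) {v} S := by
  have hCv := reachSet_setNbhd_singleton_of_connected hC.1 hv
  obtain ⟨hconn, hcard, hsep, hmin, himp⟩ := hC
  refine ⟨⟨disjoint_setNbhd.mono_right (Set.singleton_subset_iff.mpr hv),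
    hsep.anti (Set.singleton_subset_iff.mpr hv), fun W' hW' hsep' => ?_, ?_⟩, hcard⟩
  · exact hmin W' hW' ((isSeparator_singleton_iff hconn hv
      (disjoint_setNbhd.mono_left hW')).mp hsep')
  · intro W' _ hsep' hcard' hlt
    have hW'C : Disjoint W' C := disjoint_reachSet.mono_right
      (hCv.symm.subset.trans hlt.subset)
    rw [reachSet_singleton_eq hconn hv disjoint_setNbhd, reachSet_singleton_eq hconn hv hW'C]
      at hlt
    exact himp W' ((isSeparator_singleton_iff hconn hv hW'C).mp hsep') hcard' hlt

theorem setOf_isChip_subset :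
    {C | IsChip G k S C} ⊆
      ⋃ v, (fun W => reachSet G W {v}) '' importantCuts G (3 * k) {v} S := by
  intro C hC
  obtain ⟨⟨v, hv⟩⟩ := hC.1.nonempty
  exact Set.mem_iUnion.mpr ⟨v, _, hC.setNbhd_mem_importantCuts hv,
    reachSet_setNbhd_singleton_of_connected hC.1 hv⟩

theorem ncard_setOf_isChip_le [Fintype V] (G : SimpleGraph V) (k : ℕ) (S : Set V) :
    {C | IsChip G k S C}.ncard ≤ 4 ^ (3 * k) * Fintype.card V := by
  calc {C | IsChip G k S C}.ncard
      ≤ (⋃ v, (fun W => reachSet G W {v}) '' importantCuts G (3 * k) {v} S).ncard :=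
        Set.ncard_le_ncard setOf_isChip_subset
    _ ≤ ∑ v, ((fun W => reachSet G W {v}) '' importantCuts G (3 * k) {v} S).ncard :=
        Set.ncard_iUnion_le_of_fintype _
    _ ≤ ∑ _v : V, 4 ^ (3 * k) :=
        Finset.sum_le_sum fun v _ =>
          (Set.ncard_image_le (Set.toFinite _)).trans (ncard_importantCuts_le _ _ _ _)
    _ = 4 ^ (3 * k) * Fintype.card V := by
        rw [Finset.sum_const, Finset.card_univ, smul_eq_mul, mul_comm]

end Chip

theorem maximalChips_card_le_general {V : Type*} [Fintype V]
    (G : SimpleGraph V) (k : ℕ) (S : Set V) :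
    (maximalChips G k S).ncard ≤ 4 ^ (3 * k) * Fintype.card V :=
  (Set.ncard_le_ncard fun _ hC => hC.1).trans (ncard_setOf_isChip_le G k S)

/-- bound on the number of maximal chips (Lemma 3.3). -/
theorem maximalChips_card_le {V : Type*} [Fintype V] [DecidableEq V]
    (G : SimpleGraph V) (k : ℕ) (hk : 0 < k) (S : Set V) :
    (maximalChips G k S).ncard ≤ 4 ^ (3 * k) * Fintype.card V :=
  maximalChips_card_le_general G k S
end

section
/- Let G be a connected finite simple graph, k a positive integer, S ⊆ V(G), let 𝒞 be the family of all inclusion-wise maximal chips, and let A = (⋂_{C ∈ 𝒞} (V(G) ∖ N_G[C])) ∪ ⋃_{C ∈ 𝒞} N_G(C), with A = V(G) when 𝒞 = ∅. Then for every connected component D of G − A there exists a chip C ∈ 𝒞 such that D ⊆ C. -/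
open SimpleGraph

variable {V : Type*}

/-! A vertex outside `A` lies in `N[C]` for some maximal chip `C` but in no `N(C')`, so it lies in
`C`. A component `D` of `G − A` therefore avoids `N(C)`, and a connected set that meets `C` without
meeting `N(C)` cannot leave `C`. -/

theorem subset_of_preconnected_of_disjoint_setNbhd {G : SimpleGraph V} {C D : Set V}
    (hD : (G.induce D).Preconnected) {v : V} (hvD : v ∈ D) (hvC : v ∈ C)
    (hDC : Disjoint D (setNbhd G C)) : D ⊆ C := by
  intro u huD
  by_contra huC
  obtain ⟨p⟩ := hD ⟨v, hvD⟩ ⟨u, huD⟩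
  obtain ⟨d, -, hfst, hsnd⟩ := p.exists_boundary_dart {x | (x : V) ∈ C} hvC huC
  exact hDC.ne_of_mem d.snd.2 ⟨hsnd, d.fst, hfst, d.adj⟩ rfl

section chipBag

variable {G : SimpleGraph V} {k : ℕ} {S : Set V} {v : V}

theorem notMem_setNbhd_of_notMem_chipBag (hv : v ∉ chipBag G k S) {C : Set V}
    (hC : C ∈ maximalChips G k S) : v ∉ setNbhd G C :=
  fun hvN => hv (Or.inr (Set.mem_biUnion hC hvN))

theorem exists_mem_maximalChips_of_notMem_chipBag (hv : v ∉ chipBag G k S) :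
    ∃ C ∈ maximalChips G k S, v ∈ C := by
  have hv' : v ∉ ⋂ C ∈ maximalChips G k S, (closedNbhd G C)ᶜ := fun h => hv (Or.inl h)
  simp only [Set.mem_iInter, Set.mem_compl_iff, not_forall, not_not] at hv'
  obtain ⟨C, hC, hvC | hvN⟩ := hv'
  · exact ⟨C, hC, hvC⟩
  · exact absurd hvN (notMem_setNbhd_of_notMem_chipBag hv hC)

end chipBag

theorem comp_subset_chip_general {V : Type*}
    (G : SimpleGraph V) (k : ℕ) (S : Set V) :
    ∀ D : Set V, IsCompOf G (chipBag G k S) D →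
      ∃ C ∈ maximalChips G k S, D ⊆ C := by
  rintro D ⟨hDA, hDconn, -⟩
  obtain ⟨⟨v, hvD⟩⟩ := hDconn.nonempty
  obtain ⟨C, hC, hvC⟩ := exists_mem_maximalChips_of_notMem_chipBag (hDA hvD)
  have hDN : Disjoint D (setNbhd G C) :=
    Set.disjoint_left.2 fun u huD => notMem_setNbhd_of_notMem_chipBag (hDA huD) hC
  exact ⟨C, hC, subset_of_preconnected_of_disjoint_setNbhd hDconn.preconnected hvD hvC hDN⟩

/-- every component of `G − A` is contained in a maximal chip
(Claim 3.5 / Claim `chip-containment`). -/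
theorem comp_subset_chip {V : Type*} [Fintype V] [DecidableEq V]
    (G : SimpleGraph V) (hG : G.Connected) (k : ℕ) (hk : 0 < k) (S : Set V) :
    ∀ D : Set V, IsCompOf G (chipBag G k S) D →
      ∃ C ∈ maximalChips G k S, D ⊆ C :=
  comp_subset_chip_general G k S
end

section
/- Let G be a finite simple graph and k a nonnegative integer. Then there exists a set of edges E₀ ⊆ E(G) with |E₀| ≤ (k+1)·(|V(G)| − 1) such that for every edge uv ∈ E(G) ∖ E₀, the spanning subgraph (V(G), E₀) contains at least k+1 pairwise edge-disjoint paths between u and v. -/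
open SimpleGraph

variable {V : Type*}

/-!
Peel off spanning forests greedily: `F₀` is a spanning forest of `G`, `F₁` one of `G - F₀`,
and so on up to `Fₖ`. Each forest has at most `|V| - 1` edges, so `E₀ = F₀ ∪ ⋯ ∪ Fₖ` is small.
An edge `uv` of `G` outside `E₀` survives in every residual graph `G - F₀ - ⋯ - Fᵢ₋₁`, so `u`
and `v` are connected in each `Fᵢ`; since the forests are edge-disjoint, so are these paths.
-/

namespace SimpleGraph

theorem IsAcyclic.ncard_edgeSet_le [Fintype V] {F : SimpleGraph V} (hF : F.IsAcyclic) :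
    F.edgeSet.ncard ≤ Fintype.card V - 1 := by
  cases isEmpty_or_nonempty V
  · simp [Set.eq_empty_of_isEmpty F.edgeSet]
  -- Extend `F` to a maximal acyclic graph, which is a spanning tree.
  obtain ⟨T, hFT, hT⟩ := (⊤ : SimpleGraph V).exists_maximal_isAcyclic_of_le_isAcyclic le_top hF
  have hTree : T.IsTree := (connected_top.maximal_le_isAcyclic_iff_isTree le_top).mp hT
  calc F.edgeSet.ncard ≤ T.edgeSet.ncard := Set.ncard_le_ncard (edgeSet_mono hFT)
    _ = Fintype.card V - 1 := by
      classical
      rw [← hTree.card_edgeFinset, ← coe_edgeFinset, Set.ncard_coe_finset]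
      omega

theorem exists_edgeDisjoint_paths_of_reachable {ι : Type*} {F : ι → SimpleGraph V}
    (hF : Pairwise fun i j => Disjoint (F i) (F j)) {u v : V} (h : ∀ i, (F i).Reachable u v) :
    ∃ p : ι → (⨆ i, F i).Walk u v, (∀ i, (p i).IsPath) ∧
      ∀ i j, i ≠ j → ∀ e, e ∈ (p i).edges → e ∉ (p j).edges := by
  classical
  let q : ∀ i, (F i).Path u v := fun i => (h i).some.toPath
  refine ⟨fun i => (q i).1.mapLe (le_iSup F i), fun i => (q i).2.mapLe _, ?_⟩
  intro i j hij e hei hej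
  rw [Walk.edges_mapLe_eq_edges] at hei hej
  exact Set.disjoint_left.mp (disjoint_edgeSet.mpr (hF hij))
    ((q i).1.edges_subset_edgeSet hei) ((q j).1.edges_subset_edgeSet hej)

theorem ncard_edgeSet_iSup_le {ι : Type*} [Fintype ι] (F : ι → SimpleGraph V) :
    (⨆ i, F i).edgeSet.ncard ≤ ∑ i, (F i).edgeSet.ncard := by
  rw [edgeSet_iSup]
  exact Set.ncard_iUnion_le_of_fintype _

noncomputable def spanningForest (G : SimpleGraph V) : SimpleGraph V :=
  G.exists_isAcyclic_reachable_eq_le.choose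

theorem spanningForest_le (G : SimpleGraph V) : G.spanningForest ≤ G :=
  G.exists_isAcyclic_reachable_eq_le.choose_spec.1

theorem isAcyclic_spanningForest (G : SimpleGraph V) : G.spanningForest.IsAcyclic :=
  G.exists_isAcyclic_reachable_eq_le.choose_spec.2.1

theorem reachable_spanningForest (G : SimpleGraph V) :
    G.spanningForest.Reachable = G.Reachable :=
  G.exists_isAcyclic_reachable_eq_le.choose_spec.2.2

noncomputable def forestResidual (G : SimpleGraph V) : ℕ → SimpleGraph V
  | 0 => G
  | i + 1 => forestResidual G i \ (forestResidual G i).spanningForest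

noncomputable def greedyForest (G : SimpleGraph V) (i : ℕ) : SimpleGraph V :=
  (G.forestResidual i).spanningForest

theorem forestResidual_antitone (G : SimpleGraph V) : Antitone G.forestResidual :=
  antitone_nat_of_succ_le fun _ => sdiff_le

theorem greedyForest_le (G : SimpleGraph V) (i : ℕ) : G.greedyForest i ≤ G :=
  (spanningForest_le _).trans (G.forestResidual_antitone i.zero_le)

theorem isAcyclic_greedyForest (G : SimpleGraph V) (i : ℕ) : (G.greedyForest i).IsAcyclic :=
  isAcyclic_spanningForest _

theorem pairwise_disjoint_greedyForest (G : SimpleGraph V) :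
    Pairwise fun i j => Disjoint (G.greedyForest i) (G.greedyForest j) := by
  have key : ∀ i j, i < j → Disjoint (G.greedyForest i) (G.greedyForest j) := fun i j hij =>
    disjoint_sdiff_self_right.mono_right
      ((spanningForest_le _).trans (G.forestResidual_antitone hij))
  intro i j hij
  rcases hij.lt_or_gt with h | h
  · exact key i j h
  · exact (key j i h).symm

theorem forestResidual_adj {G : SimpleGraph V} {u v : V} (huv : G.Adj u v) {m : ℕ}
    (h : ∀ i < m, ¬ (G.greedyForest i).Adj u v) : (G.forestResidual m).Adj u v := by
  induction m with
  | zero => exact huv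
  | succ m ih =>
    exact ⟨ih fun i hi => h i (Nat.lt_succ_of_lt hi), h m m.lt_succ_self⟩

theorem greedyForest_reachable {G : SimpleGraph V} {u v : V} (huv : G.Adj u v) {m : ℕ}
    (h : ∀ i < m, ¬ (G.greedyForest i).Adj u v) {i : ℕ} (hi : i < m) :
    (G.greedyForest i).Reachable u v := by
  rw [greedyForest, reachable_spanningForest]
  exact (forestResidual_adj huv fun j hj => h j (hj.trans hi)).reachable

end SimpleGraph

theorem nagamochi_ibaraki_general {V : Type*} [Fintype V]
    (G : SimpleGraph V) (k : ℕ) :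
    ∃ E₀ : Set (Sym2 V), E₀ ⊆ G.edgeSet ∧
      E₀.ncard ≤ (k + 1) * (Fintype.card V - 1) ∧
      ∀ u v : V, s(u, v) ∈ G.edgeSet \ E₀ →
        ∃ p : Fin (k + 1) → (SimpleGraph.fromEdgeSet E₀).Walk u v,
          (∀ i, (p i).IsPath) ∧
          ∀ i j, i ≠ j → ∀ e, e ∈ (p i).edges → e ∉ (p j).edges := by
  let F : Fin (k + 1) → SimpleGraph V := fun i => G.greedyForest i
  refine ⟨(⨆ i, F i).edgeSet, edgeSet_mono (iSup_le fun i => G.greedyForest_le i), ?_, ?_⟩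
  · calc (⨆ i, F i).edgeSet.ncard ≤ ∑ i, (F i).edgeSet.ncard := ncard_edgeSet_iSup_le F
      _ ≤ ∑ _i : Fin (k + 1), (Fintype.card V - 1) :=
        Finset.sum_le_sum fun i _ => (G.isAcyclic_greedyForest i).ncard_edgeSet_le
      _ = (k + 1) * (Fintype.card V - 1) := by simp
  · rintro u v ⟨huv, hnot⟩
    have hout : ∀ i < k + 1, ¬ (G.greedyForest i).Adj u v := fun i hi hadj =>
      hnot ((le_iSup F ⟨i, hi⟩) hadj)
    rw [fromEdgeSet_edgeSet]
    exact exists_edgeDisjoint_paths_of_reachable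
      (fun i j hij => G.pairwise_disjoint_greedyForest (Fin.val_injective.ne hij))
      fun i => greedyForest_reachable huv hout i.isLt

/-- sparsification of Nagamochi and Ibaraki (Lemma 4.3). -/
theorem nagamochi_ibaraki {V : Type*} [Fintype V] [DecidableEq V]
    (G : SimpleGraph V) (k : ℕ) :
    ∃ E₀ : Set (Sym2 V), E₀ ⊆ G.edgeSet ∧
      E₀.ncard ≤ (k + 1) * (Fintype.card V - 1) ∧
      ∀ u v : V, s(u, v) ∈ G.edgeSet \ E₀ →
        ∃ p : Fin (k + 1) → (SimpleGraph.fromEdgeSet E₀).Walk u v,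
          (∀ i, (p i).IsPath) ∧
          ∀ i j, i ≠ j → ∀ e, e ∈ (p i).edges → e ∉ (p j).edges :=
  nagamochi_ibaraki_general G k
end

section
/- Let α ∈ (0,1) be a real number and let H be a finite simple graph on n vertices; set ζ = 2⌈1/α⌉ − 1. Then the following are equivalent: (a) every connected component of H has at most α·n vertices; (b) there exists a partition of V(H) into ζ possibly empty sets A₁, A₂, …, A_ζ such that |A_j| ≤ α·n for each j ∈ {1,…,ζ} and no edge of H joins two vertices lying in different parts. -/
/-!
(b) ⇒ (a): parts with no crossing edges are unions of components, so every component lies in a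
single part of size at most `αn`.

(a) ⇒ (b): pack the components, items of size at most `αn`, greedily: fill a bin until the next
component would overflow it, give that component a bin of its own, and repeat with the rest.
Each such pair of bins holds more than `αn` vertices, so with `m = ⌈1/α⌉` (hence `n ≤ mαn`) the
components are used up after at most `m - 1` pairs and one final bin, i.e. `2m - 1` bins.
-/

open SimpleGraph

variable {V : Type*}

lemma exists_binPacking_of_sum_le {ι M : Type*} [AddCommMonoid M] [Preorder M] (w : ι → M)
    {B : M} (hB : 0 ≤ B) {s : Finset ι} (hs : ∑ i ∈ s, w i ≤ B) :
    ∃ f : ι → ℕ, (∀ i ∈ s, f i = 0) ∧ ∀ j, ∑ i ∈ s with f i = j, w i ≤ B := by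
  refine ⟨fun _ => 0, fun _ _ => rfl, fun j => ?_⟩
  rcases eq_or_ne j 0 with rfl | hj
  · simpa using hs
  · simpa [hj.symm] using hB

section BinPacking

variable {ι K : Type*} [Field K] [LinearOrder K] [IsStrictOrderedRing K] (w : ι → K) {B : K}

lemma Finset.exists_subset_sum_le_lt_sum_add (hB : 0 ≤ B) [DecidableEq ι] {s : Finset ι}
    (hs : B < ∑ i ∈ s, w i) :
    ∃ T ⊆ s, ∃ x ∈ s, x ∉ T ∧ ∑ i ∈ T, w i ≤ B ∧ B < ∑ i ∈ T, w i + w x := by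
  induction s using Finset.induction_on with
  | empty => simp at hs; linarith
  | insert a s ha ih =>
    by_cases hsB : B < ∑ i ∈ s, w i
    · obtain ⟨T, hTs, x, hxs, hxT, hT, hTx⟩ := ih hsB
      exact ⟨T, hTs.trans (Finset.subset_insert a s), x, Finset.mem_insert_of_mem hxs, hxT, hT, hTx⟩
    · rw [Finset.sum_insert ha] at hs
      exact ⟨s, Finset.subset_insert a s, a, Finset.mem_insert_self a s, ha, not_lt.1 hsB,
        by linarith⟩

/-- Bins `2j` and `2j + 1` are filled from a prefix overflowing `B`, so each pair of bins except the
last one consumes more than `B` of the total. -/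
theorem exists_binPacking (hB : 0 ≤ B) (m : ℕ) {s : Finset ι} (hw : ∀ i ∈ s, w i ≤ B)
    (hs : ∑ i ∈ s, w i ≤ (m + 1) * B) :
    ∃ f : ι → ℕ, (∀ i ∈ s, f i ≤ 2 * m) ∧ ∀ j, ∑ i ∈ s with f i = j, w i ≤ B := by
  classical
  induction m generalizing s with
  | zero =>
    obtain ⟨f, hf0, hf⟩ := exists_binPacking_of_sum_le w hB (by simpa using hs)
    exact ⟨f, fun i hi => (hf0 i hi).le, hf⟩
  | succ m ih =>
    by_cases hle : ∑ i ∈ s, w i ≤ B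
    · obtain ⟨f, hf0, hf⟩ := exists_binPacking_of_sum_le w hB hle
      exact ⟨f, fun i hi => (hf0 i hi).trans_le (Nat.zero_le _), hf⟩
    obtain ⟨T, hTs, x, hxs, hxT, hT, hTx⟩ :=
      Finset.exists_subset_sum_le_lt_sum_add w hB (not_le.1 hle)
    have hrest : ∑ i ∈ s \ insert x T, w i ≤ (m + 1) * B := by
      have := Finset.sum_sdiff (f := w) (Finset.insert_subset hxs hTs)
      rw [Finset.sum_insert hxT] at this
      push_cast at hs
      linarith
    obtain ⟨g, hgm, hg⟩ := ih (fun i hi => hw i (Finset.sdiff_subset hi)) hrest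
    refine ⟨fun i => if i ∈ T then 0 else if i = x then 1 else g i + 2, fun i hi => ?_, fun j => ?_⟩
    · have := hgm i
      grind
    rcases j with _ | _ | k
    · convert hT using 2
      grind
    · convert hw x hxs using 1
      rw [← Finset.sum_singleton w x]
      congr 1
      grind
    · convert hg k using 2
      grind

end BinPacking

namespace SimpleGraph

variable {G : SimpleGraph V}

lemma ConnectedComponent.supp_subset_of_adj_closed {s : Set V}
    (hs : ∀ u v, G.Adj u v → u ∈ s → v ∈ s) {v : V} (hv : v ∈ s) :
    (G.connectedComponentMk v).supp ⊆ s := by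
  intro u hu
  have hvu := (reachable_iff_reflTransGen v u).1 (ConnectedComponent.eq.1 hu).symm
  clear hu
  induction hvu with
  | refl => exact hv
  | tail _ hadj ih => exact hs _ _ hadj ih

lemma ConnectedComponent.exists_supp_subset {ι : Type*} {A : ι → Set V}
    (hcover : ⋃ i, A i = Set.univ) (hedge : ∀ u v, G.Adj u v → ∀ i j, u ∈ A i → v ∈ A j → i = j)
    (c : G.ConnectedComponent) : ∃ i, c.supp ⊆ A i := by
  have hmem : ∀ v, ∃ i, v ∈ A i := fun v => Set.mem_iUnion.1 (hcover ▸ Set.mem_univ v)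
  obtain ⟨v, rfl⟩ := c.exists_rep
  obtain ⟨i, hi⟩ := hmem v
  refine ⟨i, supp_subset_of_adj_closed (fun u w huw hu => ?_) hi⟩
  obtain ⟨j, hj⟩ := hmem w
  exact hedge u w huw i j hu hj ▸ hj

lemma ConnectedComponent.sum_ncard_supp_filter [Fintype V] [Fintype G.ConnectedComponent]
    {κ : Type*} [DecidableEq κ] (f : G.ConnectedComponent → κ) (j : κ) :
    ∑ c with f c = j, c.supp.ncard = {v | f (G.connectedComponentMk v) = j}.ncard := by
  classical
  rw [Set.ncard_eq_toFinset_card', Finset.card_eq_sum_card_fiberwise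
    (f := G.connectedComponentMk) (t := Finset.univ.filter (f · = j)) (fun v hv => by simpa using hv)]
  refine Finset.sum_congr rfl fun c hc => ?_
  rw [Set.ncard_eq_toFinset_card']
  congr 1
  ext v
  simp only [Finset.mem_filter, Finset.mem_univ, true_and] at hc
  simp only [Set.mem_toFinset, ConnectedComponent.mem_supp_iff, Finset.mem_filter,
    Set.mem_ofPred_eq]
  exact ⟨fun hv => ⟨hv ▸ hc, hv⟩, And.right⟩

lemma ConnectedComponent.sum_ncard_supp [Fintype V] [Fintype G.ConnectedComponent] :
    ∑ c : G.ConnectedComponent, c.supp.ncard = Fintype.card V := by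
  simpa using sum_ncard_supp_filter (G := G) (fun _ => ()) ()

theorem exists_partition_of_ncard_supp_le [Fintype V] {B : ℝ} (hB : 0 ≤ B) {m k : ℕ}
    (hk : 2 * m < k) (hsmall : ∀ c : G.ConnectedComponent, (c.supp.ncard : ℝ) ≤ B)
    (hV : (Fintype.card V : ℝ) ≤ (m + 1) * B) :
    ∃ A : Fin k → Set V,
      (∀ i j, i ≠ j → Disjoint (A i) (A j)) ∧
      (⋃ j, A j) = Set.univ ∧
      (∀ j, ((A j).ncard : ℝ) ≤ B) ∧
      ∀ u v : V, G.Adj u v → ∀ i j, u ∈ A i → v ∈ A j → i = j := by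
  classical
  obtain ⟨f, hfm, hf⟩ := exists_binPacking (fun c : G.ConnectedComponent => (c.supp.ncard : ℝ))
    hB m (s := Finset.univ) (fun c _ => hsmall c)
    (by rw [← Nat.cast_sum, ConnectedComponent.sum_ncard_supp]; exact hV)
  refine ⟨fun j => {v | f (G.connectedComponentMk v) = j}, ?_, ?_, fun j => ?_, ?_⟩
  · intro i j hij
    exact Set.disjoint_left.2 fun v hi hj => hij (Fin.ext (hi.symm.trans hj))
  · refine Set.iUnion_eq_univ_iff.2 fun v => ⟨⟨f (G.connectedComponentMk v), ?_⟩, rfl⟩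
    have := hfm _ (Finset.mem_univ (G.connectedComponentMk v))
    omega
  · simpa [← Nat.cast_sum, ConnectedComponent.sum_ncard_supp_filter] using hf j
  · intro u v huv i j hu hv
    exact Fin.ext (hu.symm.trans (ConnectedComponent.connectedComponentMk_eq_of_adj huv ▸ hv))

end SimpleGraph

theorem small_components_iff_partition_general {V : Type*} [Fintype V]
    {α : ℝ} (hα : α ∈ Set.Ioo (0 : ℝ) 1) (H : SimpleGraph V) :
    (∀ c : H.ConnectedComponent, (c.supp.ncard : ℝ) ≤ α * Fintype.card V) ↔
      ∃ A : Fin (2 * ⌈1 / α⌉₊ - 1) → Set V,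
        (∀ i j, i ≠ j → Disjoint (A i) (A j)) ∧
        (⋃ j, A j) = Set.univ ∧
        (∀ j, ((A j).ncard : ℝ) ≤ α * Fintype.card V) ∧
        ∀ u v : V, H.Adj u v → ∀ i j, u ∈ A i → v ∈ A j → i = j := by
  refine ⟨fun hsmall => ?_, fun ⟨A, _, hcover, hsize, hedge⟩ c => ?_⟩
  · have hα0 := hα.1
    obtain ⟨m, hm⟩ : ∃ m, ⌈1 / α⌉₊ = m + 1 :=
      Nat.exists_eq_add_one.2 (Nat.ceil_pos.2 (by positivity))
    refine H.exists_partition_of_ncard_supp_le (m := m) (by positivity) (by omega) hsmall ?_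
    have hmα : 1 ≤ ((m : ℝ) + 1) * α := by
      have := Nat.le_ceil (1 / α)
      rwa [hm, Nat.cast_add_one, div_le_iff₀ hα0] at this
    calc (Fintype.card V : ℝ) ≤ ((m : ℝ) + 1) * α * Fintype.card V :=
          le_mul_of_one_le_left (Nat.cast_nonneg _) hmα
      _ = _ := by ring
  · obtain ⟨i, hi⟩ := c.exists_supp_subset hcover hedge
    exact le_trans (by exact_mod_cast Set.ncard_le_ncard hi) (hsize i)

/-- small components iff a partition into `2⌈1/α⌉−1` small parts
with no crossing edges (Corollary 6.3). -/
theorem small_components_iff_partition {V : Type*} [Fintype V] [DecidableEq V]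
    {α : ℝ} (hα : α ∈ Set.Ioo (0 : ℝ) 1) (H : SimpleGraph V) :
    (∀ c : H.ConnectedComponent, (c.supp.ncard : ℝ) ≤ α * Fintype.card V) ↔
      ∃ A : Fin (2 * ⌈1 / α⌉₊ - 1) → Set V,
        (∀ i j, i ≠ j → Disjoint (A i) (A j)) ∧
        (⋃ j, A j) = Set.univ ∧
        (∀ j, ((A j).ncard : ℝ) ≤ α * Fintype.card V) ∧
        ∀ u v : V, H.Adj u v → ∀ i j, u ∈ A i → v ∈ A j → i = j :=
  small_components_iff_partition_general hα H
end
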